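/- For all integers N ≥ 1 and d ≥ 0, the following identity holds in the polynomial ring ℤ[q]: (Σ_{s=0}^{N−1} q^s) · (Σ_{K ⊆ {0,1,…,d+1}, |K|=N+1} q^{ΣK}) = q^N · Σ_{(i,j) semistandard} q^{|i|+j}, where the sum on the right is over all semistandard pairs (i,j) ∈ I(d,N) × {0,1,…,d} and ΣK denotes the sum of the elements of K. (This is the identity q^{N(N−1)/2}·[N]_q·[d+2 choose N+1]_q = s_{(2,1^{N−1})}(1,q,…,q^d), where [N]_q = 1+q+⋯+q^{N−1}, [a choose b]_q denotes the Gaussian binomial coefficient, and s_{(2,1^{N−1})} is the Schur function of the partition (2,1^{N−1}), rewritten via the facts that q^{b(b−1)/2}[a choose b]_q is the generating function for b-subsets of {0,…,a−1} by sum of entries and that s_λ(1,q,…,q^d) is the generating function for semistandard tableaux of shape λ with entries in {0,…,d} by sum of entries.) -/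

import Mathlib

/-!
Multiplying by `[N]_q` amounts to choosing, in an `(N + 1)`-subset `K` of `{0, …, d + 1}`, an
element `k` other than its minimum, with weight `q ^ (r - 1)`, where `r ≥ 1` is the number of
elements of `K` below `k`. Deleting `k` from `K` and shifting the elements above it down by one
gives an `N`-subset `I` of `{0, …, d}` together with `j = k - 1 ≥ min I`, i.e. a semistandard
pair; this is a bijection, and the weights match: `(r - 1) + ΣK = N + ΣI + j`.
-/

open Finset

theorem Finset.sum_card_filter_lt_eq_sum_range {α M : Type*} [LinearOrder α] [AddCommMonoid M]
    (K : Finset α) (f : ℕ → M) :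
    ∑ k ∈ K, f #{x ∈ K | x < k} = ∑ r ∈ range #K, f r := by
  induction K using Finset.induction_on_max with
  | empty => simp
  | insert a K ha ih =>
    have haK : a ∉ K := fun h => lt_irrefl a (ha a h)
    rw [sum_insert haK, card_insert_of_notMem haK, sum_range_succ, add_comm, ← ih]
    congr 1
    · refine sum_congr rfl fun k hk => ?_
      rw [filter_insert, if_neg (ha k hk).not_gt]
    · rw [filter_insert, if_neg (lt_irrefl a), filter_true_of_mem ha]

theorem Finset.sum_range_eq_sum_filter_exists_lt {α M : Type*} [LinearOrder α]
    [AddCommMonoid M] {N : ℕ} {K : Finset α} (hK : #K = N + 1) (f : ℕ → M) :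
    ∑ s ∈ range N, f s = ∑ k ∈ K with ∃ x ∈ K, x < k, f (#{x ∈ K | x < k} - 1) := by
  have hrank (k : α) : (∃ x ∈ K, x < k) ↔ #{x ∈ K | x < k} ≠ 0 := by simp
  rw [sum_filter, ← sum_congr rfl fun k _ => (if_congr (hrank k) rfl rfl).symm,
    sum_card_filter_lt_eq_sum_range K fun r => if r ≠ 0 then f (r - 1) else 0, hK,
    sum_range_succ']
  simp

def shiftAbove (j x : ℕ) : ℕ := if x ≤ j then x else x + 1

def insertGap (j : ℕ) (I : Finset ℕ) : Finset ℕ := insert (j + 1) (I.image (shiftAbove j))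

def closeGap (k : ℕ) (K : Finset ℕ) : Finset ℕ :=
  (K.erase k).image fun x => if x < k then x else x - 1

lemma shiftAbove_injective (j : ℕ) : Function.Injective (shiftAbove j) := by
  intro x y
  simp only [shiftAbove]
  split_ifs <;> omega

lemma succ_notMem_image_shiftAbove (j : ℕ) (I : Finset ℕ) :
    j + 1 ∉ I.image (shiftAbove j) := by
  simp only [mem_image, not_exists, not_and, shiftAbove]
  intro x _
  split_ifs <;> omega

lemma closeGap_insertGap (j : ℕ) (I : Finset ℕ) : closeGap (j + 1) (insertGap j I) = I := by
  rw [closeGap, insertGap, erase_insert (succ_notMem_image_shiftAbove j I), image_image]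
  convert image_id (s := I)
  ext x
  simp only [Function.comp_apply, id_eq, shiftAbove]
  split_ifs <;> omega

lemma insertGap_closeGap {k : ℕ} {K : Finset ℕ} (hk : k ∈ K) (hk0 : 0 < k) :
    insertGap (k - 1) (closeGap k K) = K := by
  rw [insertGap, closeGap, image_image, Nat.sub_add_cancel hk0]
  conv_rhs => rw [← insert_erase hk]
  congr 1
  convert image_id (s := K.erase k) using 1
  refine image_congr fun x hx => ?_
  have : x ≠ k := ne_of_mem_erase hx
  simp only [Function.comp_apply, id_eq, shiftAbove]
  split_ifs <;> omega

lemma card_insertGap (j : ℕ) (I : Finset ℕ) : #(insertGap j I) = #I + 1 := by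
  rw [insertGap, card_insert_of_notMem (succ_notMem_image_shiftAbove j I),
    card_image_of_injective _ (shiftAbove_injective j)]

lemma sum_insertGap (j : ℕ) (I : Finset ℕ) :
    ∑ x ∈ insertGap j I, x = ∑ x ∈ I, x + j + 1 + #{x ∈ I | j < x} := by
  rw [insertGap, sum_insert (succ_notMem_image_shiftAbove j I),
    sum_image fun x _ y _ h => shiftAbove_injective j h, card_filter]
  have (x : ℕ) : shiftAbove j x = x + if j < x then 1 else 0 := by
    simp only [shiftAbove]
    split_ifs <;> omega
  simp only [this, sum_add_distrib]
  ring

lemma card_filter_lt_insertGap (j : ℕ) (I : Finset ℕ) :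
    #{x ∈ insertGap j I | x < j + 1} = #{x ∈ I | x ≤ j} := by
  rw [insertGap, filter_insert, if_neg (lt_irrefl _), filter_image,
    card_image_of_injective _ (shiftAbove_injective j)]
  congr 1
  refine filter_congr fun x _ => ?_
  simp only [shiftAbove]
  split_ifs <;> omega

lemma exists_lt_insertGap_iff (j : ℕ) (I : Finset ℕ) :
    (∃ x ∈ insertGap j I, x < j + 1) ↔ ∃ x ∈ I, x ≤ j := by
  rw [← filter_nonempty_iff, ← filter_nonempty_iff, ← card_pos, ← card_pos,
    card_filter_lt_insertGap]

lemma insertGap_subset_range_iff {j n : ℕ} {I : Finset ℕ} :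
    insertGap j I ⊆ range (n + 1) ↔ I ⊆ range n ∧ j < n := by
  rw [insertGap, insert_subset_iff, image_subset_iff, subset_iff]
  simp only [mem_range, shiftAbove]
  constructor
  · rintro ⟨hj, hI⟩
    refine ⟨fun x hx => ?_, by omega⟩
    have := hI x hx
    split_ifs at this <;> omega
  · rintro ⟨hI, hj⟩
    refine ⟨by omega, fun x hx => ?_⟩
    have := hI hx
    split_ifs <;> omega

theorem sum_sum_exists_lt_eq_sum_insertGap {M : Type*} [AddCommMonoid M] (N n : ℕ)
    (f : Finset ℕ → ℕ → M) :
    ∑ K ∈ powersetCard (N + 1) (range (n + 1)), ∑ k ∈ K with ∃ x ∈ K, x < k, f K k =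
      ∑ p ∈ powersetCard N (range n) ×ˢ range n with ∃ x ∈ p.1, x ≤ p.2,
        f (insertGap p.2 p.1) (p.2 + 1) := by
  rw [sum_sigma']
  refine (sum_nbij'
    (i := fun p : Finset ℕ × ℕ => (⟨insertGap p.2 p.1, p.2 + 1⟩ : Σ _ : Finset ℕ, ℕ))
    (j := fun q => (closeGap q.2 q.1, q.2 - 1)) ?_ ?_ ?_ ?_ fun _ _ => rfl).symm
  · rintro ⟨I, j⟩ h
    simp only [mem_filter, mem_product, mem_powersetCard, mem_range] at h
    simp only [mem_sigma, mem_powersetCard, mem_filter, card_insertGap,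
      insertGap_subset_range_iff, exists_lt_insertGap_iff, add_left_inj]
    exact ⟨⟨⟨h.1.1.1, h.1.2⟩, h.1.1.2⟩, mem_insert_self _ _, h.2⟩
  · rintro ⟨K, k⟩ h
    simp only [mem_sigma, mem_powersetCard, mem_filter] at h
    obtain ⟨⟨hKn, hKcard⟩, hk, x, hx, hxk⟩ := h
    have hK := insertGap_closeGap hk (by omega)
    have hex : ∃ x ∈ insertGap (k - 1) (closeGap k K), x < k - 1 + 1 :=
      ⟨x, by rwa [hK], by omega⟩
    rw [← hK, insertGap_subset_range_iff] at hKn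
    rw [← hK, card_insertGap, add_left_inj] at hKcard
    rw [exists_lt_insertGap_iff] at hex
    simp only [mem_filter, mem_product, mem_powersetCard, mem_range]
    exact ⟨⟨⟨hKn.1, hKcard⟩, hKn.2⟩, hex⟩
  · rintro ⟨I, j⟩ -
    simp [closeGap_insertGap]
  · rintro ⟨K, k⟩ h
    simp only [mem_sigma, mem_filter] at h
    obtain ⟨-, hk, x, -, hxk⟩ := h
    simp [insertGap_closeGap hk (by omega), Nat.sub_add_cancel (by omega : 1 ≤ k)]

theorem sum_strictMono_eq_sum_powersetCard {M : Type*} [AddCommMonoid M] {N m : ℕ} (hN : 0 < N)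
    (f : ℕ → ℕ → M) :
    ∑ p ∈ univ.filter (fun p : (Fin N → Fin m) × Fin m =>
        StrictMono p.1 ∧ (p.1 ⟨0, hN⟩ : ℕ) ≤ (p.2 : ℕ)), f (∑ a, (p.1 a : ℕ)) p.2 =
      ∑ p ∈ powersetCard N (range m) ×ˢ range m with ∃ x ∈ p.1, x ≤ p.2,
        f (∑ x ∈ p.1, x) p.2 := by
  have hval {i : Fin N → Fin m} (hi : StrictMono i) : StrictMono fun a => (i a : ℕ) :=
    Fin.val_strictMono.comp hi
  refine sum_bij (fun p _ => (univ.image fun a => (p.1 a : ℕ), (p.2 : ℕ))) ?_ ?_ ?_ ?_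
  · rintro ⟨i, j⟩ hp
    simp only [mem_filter, mem_univ, true_and] at hp
    simp only [mem_filter, mem_product, mem_powersetCard, mem_range,
      card_image_of_injective _ (hval hp.1).injective, card_univ, Fintype.card_fin, and_true]
    refine ⟨⟨fun x hx => ?_, j.2⟩, _, mem_image_of_mem _ (mem_univ ⟨0, hN⟩), hp.2⟩
    obtain ⟨a, -, rfl⟩ := mem_image.1 hx
    exact mem_range.2 (i a).2
  · rintro ⟨i, j⟩ hp ⟨i', j'⟩ hp' h
    simp only [mem_filter, mem_univ, true_and] at hp hp'
    simp only [Prod.mk.injEq] at h ⊢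
    have hrange := congrArg ((↑) : Finset ℕ → Set ℕ) h.1
    simp only [coe_image, coe_univ, Set.image_univ] at hrange
    have := ((hval hp.1).range_inj (hval hp'.1)).1 hrange
    exact ⟨funext fun a => Fin.ext (congrFun this a), Fin.ext h.2⟩
  · rintro ⟨I, j⟩ h
    simp only [mem_filter, mem_product, mem_powersetCard, mem_range] at h
    obtain ⟨⟨⟨hIm, hIN⟩, hj⟩, x, hx, hxj⟩ := h
    set e := I.orderEmbOfFin hIN
    have he (a : Fin N) : e a < m := mem_range.1 (hIm (orderEmbOfFin_mem I hIN a))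
    obtain ⟨b, rfl⟩ : x ∈ Set.range e := by rwa [range_orderEmbOfFin]
    refine ⟨(fun a => ⟨e a, he a⟩, ⟨j, hj⟩), ?_, ?_⟩
    · simp only [mem_filter, mem_univ, true_and]
      exact ⟨fun a b hab => e.strictMono hab,
        (e.monotone (Fin.mk_le_mk.2 (Nat.zero_le b))).trans hxj⟩
    · simp [e]
  · rintro ⟨i, j⟩ hp
    simp only [mem_filter, mem_univ, true_and] at hp
    rw [sum_image fun a _ b _ hab => (hval hp.1).injective hab]

/-- Corollary 3.2 of the paper. The `q`-binomial identity
`q^{N(N-1)/2} [N]_q \binom{d+2}{N+1}_q = s_{(2,1^{N-1})}(1,q,…,q^d)`, written in `ℤ[q]` as: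
`(Σ_{s<N} q^s) · (Σ_{K ⊆ {0,…,d+1}, |K| = N+1} q^{ΣK}) = q^N · Σ_{(i,j) semistandard} q^{|i|+j}`,
where the right-hand sum is over all semistandard pairs `(i,j) ∈ I(d,N) × {0,…,d}`. -/
theorem statement19 (N d : ℕ) (hN : 0 < N) :
    (∑ s ∈ Finset.range N, (Polynomial.X : Polynomial ℤ) ^ s) *
      (∑ K ∈ (Finset.range (d + 2)).powersetCard (N + 1), Polynomial.X ^ (∑ x ∈ K, x)) =
    Polynomial.X ^ N *
      ∑ p ∈ Finset.univ.filter
          (fun p : (Fin N → Fin (d + 1)) × Fin (d + 1) =>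
            StrictMono p.1 ∧ (p.1 ⟨0, hN⟩ : ℕ) ≤ (p.2 : ℕ)),
        Polynomial.X ^ ((∑ a, (p.1 a : ℕ)) + (p.2 : ℕ)) := by
  rw [sum_strictMono_eq_sum_powersetCard hN fun s j => Polynomial.X ^ (s + j), mul_sum, mul_sum]
  have hgeom (K : Finset ℕ) (hK : K ∈ powersetCard (N + 1) (range (d + 2))) :
      (∑ s ∈ range N, (Polynomial.X : Polynomial ℤ) ^ s) * Polynomial.X ^ (∑ x ∈ K, x) =
        ∑ k ∈ K with ∃ x ∈ K, x < k,
          Polynomial.X ^ (#{x ∈ K | x < k} - 1 + ∑ x ∈ K, x) := by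
    simp only [sum_range_eq_sum_filter_exists_lt (mem_powersetCard.1 hK).2, sum_mul, pow_add]
  rw [sum_congr rfl hgeom, sum_sum_exists_lt_eq_sum_insertGap N (d + 1)]
  refine sum_congr rfl fun p hp => ?_
  simp only [mem_filter, mem_product, mem_powersetCard] at hp
  obtain ⟨⟨⟨-, hcard⟩, -⟩, hex⟩ := hp
  have hpos : 0 < #{x ∈ p.1 | x ≤ p.2} := card_pos.2 (filter_nonempty_iff.2 hex)
  have hsplit := card_filter_add_card_filter_not (s := p.1) (· ≤ p.2)
  simp only [not_le] at hsplit
  rw [← pow_add, card_filter_lt_insertGap, sum_insertGap]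
  congr 1
  omega
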